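/- Let (a,b) be a fictitious-play trajectory. Let n ≥ 7 and let t_1 < t_2 < … < t_n be rounds such that ρ_{t_{i+1}} ≥ ⌊ρ_{t_i}⌋ + 1 for every i ∈ {1,…,n−1}. Then t_n − t_1 > n²/10. -/

import Mathlib

open MeasureTheory

/-- Bob's choice of the left or right piece. -/
inductive Choice
  | L
  | R
deriving DecidableEq

/-- The cumulative valuation `V(x) = ∫_0^x v`. -/
noncomputable def cumul (v : ℝ → ℝ) (x : ℝ) : ℝ := ∫ y in (0:ℝ)..x, v y

/-- `v` is an integrable value density on `[0,1]`, bounded between `lo` and `hi`,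
integrating to `1`. -/
def IsDensity (lo hi : ℝ) (v : ℝ → ℝ) : Prop :=
  IntervalIntegrable v volume 0 1 ∧
  (∀ x ∈ Set.Icc (0:ℝ) 1, lo ≤ v x ∧ v x ≤ hi) ∧
  (∫ y in (0:ℝ)..1, v y) = 1

/-- Alice's round-`t` utility: if Bob picks `L` she gets `[a_t,1]`, else `[0,a_t]`. -/
noncomputable def uA (vA : ℝ → ℝ) (a : ℕ → ℝ) (b : ℕ → Choice) (t : ℕ) : ℝ :=
  if b t = Choice.L then 1 - cumul vA (a t) else cumul vA (a t)

/-- Bob's round-`t` utility: if he picks `L` he gets `[0,a_t]`, else `[a_t,1]`. -/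
noncomputable def uB (vB : ℝ → ℝ) (a : ℕ → ℝ) (b : ℕ → Choice) (t : ℕ) : ℝ :=
  if b t = Choice.L then cumul vB (a t) else 1 - cumul vB (a t)

/-- `α_t = r_t − ℓ_t`: number of `R` choices minus number of `L` choices up to round `t`. -/
noncomputable def alphaFP (b : ℕ → Choice) (t : ℕ) : ℝ :=
  ∑ i ∈ Finset.Icc 1 t, (if b i = Choice.R then (1:ℝ) else -1)

/-- `β_t = Σ_{i=1}^t (2 V_B(a_i) − 1)`. -/
noncomputable def betaFP (vB : ℝ → ℝ) (a : ℕ → ℝ) (t : ℕ) : ℝ :=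
  ∑ i ∈ Finset.Icc 1 t, (2 * cumul vB (a i) - 1)

/-- The radius `ρ_t = |α_t| + |β_t|`. -/
noncomputable def rhoFP (vB : ℝ → ℝ) (a : ℕ → ℝ) (b : ℕ → Choice) (t : ℕ) : ℝ :=
  |alphaFP b t| + |betaFP vB a t|

/-- `(a,b)` is a fictitious-play trajectory. -/
def IsFictitiousPlay (vB : ℝ → ℝ) (a : ℕ → ℝ) (b : ℕ → Choice) : Prop :=
  ∀ t : ℕ,
    (0 < alphaFP b t → a (t+1) = 1) ∧
    (alphaFP b t < 0 → a (t+1) = 0) ∧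
    (0 < betaFP vB a t → b (t+1) = Choice.L) ∧
    (betaFP vB a t < 0 → b (t+1) = Choice.R)

/-- Round `t` is axis-crossing. -/
def AxisCrossing (vB : ℝ → ℝ) (a : ℕ → ℝ) (b : ℕ → Choice) (t : ℕ) : Prop :=
  alphaFP b t = 0 ∨
  (betaFP vB a t ≤ 0 ∧ 0 < betaFP vB a (t+1)) ∨
  (0 ≤ betaFP vB a t ∧ betaFP vB a (t+1) < 0)

/-!
In the open quadrant where `α` has sign `σ` and `β` has sign `τ`, Alice cuts at an endpoint and
Bob always picks the same side, so each round moves `(α, β)` by exactly `(-τ, σ)`: the point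
slides along a side of the `ℓ¹`-sphere `|α| + |β| = ρ`, and `ρ` can only change at an
axis-crossing round. Hence between `t_i` and `t_{i+1}` there is a crossing at radius
`ρ_{t_i} ≥ i - 1`, and after a crossing at radius `ρ` the point needs `ρ - 1` rounds to traverse
the next side before it can cross again. Summing these gaps `i - 2` gives
`t_n - t_1 ≥ (n - 2)(n - 5)/2 + 1 > n²/10` for `n ≥ 7`.
-/

lemma exists_sign_mul_pos {x : ℝ} (hx : x ≠ 0) : ∃ σ : ℝ, (σ = 1 ∨ σ = -1) ∧ 0 < σ * x := by
  rcases hx.lt_or_gt with h | h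
  · exact ⟨-1, Or.inr rfl, by linarith⟩
  · exact ⟨1, Or.inl rfl, by linarith⟩

lemma abs_eq_mul_of_sign {σ x : ℝ} (hσ : σ = 1 ∨ σ = -1) (h : 0 ≤ σ * x) : |x| = σ * x := by
  rcases hσ with rfl | rfl
  · rw [one_mul] at h ⊢; exact abs_of_nonneg h
  · rw [neg_one_mul] at h ⊢; exact abs_of_nonpos (neg_nonneg.mp h)

lemma sub_one_le_of_floor_add_one_le {x : ℕ → ℝ} {n : ℕ} (h₀ : 0 ≤ x 1)
    (h : ∀ i, 1 ≤ i → i < n → (⌊x i⌋ : ℝ) + 1 ≤ x (i + 1)) :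
    ∀ i, 1 ≤ i → i ≤ n → (i : ℝ) - 1 ≤ x i := by
  intro i hi
  induction i, hi using Nat.le_induction with
  | base => simpa using fun _ => h₀
  | succ i hi ih =>
    intro hin
    have hfloor : ((i : ℤ) - 1 : ℤ) ≤ ⌊x i⌋ :=
      Int.le_floor.mpr (by push_cast; exact ih (by omega))
    have hfloor' : (i : ℝ) - 1 ≤ ⌊x i⌋ := by exact_mod_cast hfloor
    push_cast
    linarith [h i hi (by omega)]

lemma sub_one_mul_sub_four_div_two_le_sub {f : ℕ → ℝ} {n : ℕ}
    (h : ∀ i, 1 ≤ i → i < n → (i : ℝ) - 2 ≤ f (i + 1) - f i) :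
    ∀ i, 1 ≤ i → i ≤ n → ((i : ℝ) - 1) * (i - 4) / 2 ≤ f i - f 1 := by
  intro i hi
  induction i, hi using Nat.le_induction with
  | base => simp
  | succ i hi ih =>
    intro hin
    push_cast
    linarith [ih (by omega), h i hi (by omega)]

lemma cumul_zero (v : ℝ → ℝ) : cumul v 0 = 0 := intervalIntegral.integral_same

section Density

variable {δ Δ : ℝ} {v : ℝ → ℝ}

lemma IsDensity.cumul_one (hv : IsDensity δ Δ v) : cumul v 1 = 1 := hv.2.2

lemma IsDensity.cumul_mem_Icc (hδ : 0 ≤ δ) (hv : IsDensity δ Δ v) {x : ℝ}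
    (hx : x ∈ Set.Icc (0 : ℝ) 1) : cumul v x ∈ Set.Icc (0 : ℝ) 1 := by
  have hnonneg : ∀ y ∈ Set.Icc (0 : ℝ) 1, 0 ≤ v y := fun y hy => hδ.trans (hv.2.1 y hy).1
  refine ⟨intervalIntegral.integral_nonneg hx.1 fun y hy => hnonneg y ⟨hy.1, hy.2.trans hx.2⟩, ?_⟩
  rw [← hv.cumul_one]
  refine intervalIntegral.integral_mono_interval le_rfl hx.1 hx.2 ?_ hv.1
  exact (ae_restrict_iff' measurableSet_Ioc).mpr
    (ae_of_all _ fun y hy => hnonneg y (Set.Ioc_subset_Icc_self hy))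

end Density

section Trajectory

variable {δ Δ : ℝ} {vB : ℝ → ℝ} {a : ℕ → ℝ} {b : ℕ → Choice}

lemma alphaFP_succ (b : ℕ → Choice) (t : ℕ) :
    alphaFP b (t + 1) = alphaFP b t + (if b (t + 1) = Choice.R then 1 else -1) :=
  Finset.sum_Icc_succ_top (by omega) _

lemma betaFP_succ (vB : ℝ → ℝ) (a : ℕ → ℝ) (t : ℕ) :
    betaFP vB a (t + 1) = betaFP vB a t + (2 * cumul vB (a (t + 1)) - 1) :=
  Finset.sum_Icc_succ_top (by omega) _

lemma one_le_abs_alphaFP {t : ℕ} (h : alphaFP b t ≠ 0) : 1 ≤ |alphaFP b t| := by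
  have hint : alphaFP b t = ((∑ i ∈ Finset.Icc 1 t, if b i = Choice.R then 1 else -1 : ℤ) : ℝ) := by
    push_cast [alphaFP]; rfl
  rw [hint] at h ⊢
  exact_mod_cast Int.one_le_abs (by exact_mod_cast h)

lemma abs_alphaFP_succ_sub (b : ℕ → Choice) (t : ℕ) : |alphaFP b (t + 1) - alphaFP b t| = 1 := by
  rw [alphaFP_succ]
  split_ifs <;> simp

lemma abs_betaFP_succ_sub_le (hδ : 0 ≤ δ) (hB : IsDensity δ Δ vB)
    (ha : ∀ t : ℕ, 1 ≤ t → a t ∈ Set.Icc (0 : ℝ) 1) (t : ℕ) :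
    |betaFP vB a (t + 1) - betaFP vB a t| ≤ 1 := by
  obtain ⟨h0, h1⟩ := hB.cumul_mem_Icc hδ (ha (t + 1) (by omega))
  rw [betaFP_succ, add_sub_cancel_left, abs_le]
  constructor <;> linarith

namespace IsFictitiousPlay

lemma alphaFP_succ_of_sign (hfp : IsFictitiousPlay vB a b) {τ : ℝ} (hτ : τ = 1 ∨ τ = -1)
    {t : ℕ} (h : 0 < τ * betaFP vB a t) : alphaFP b (t + 1) = alphaFP b t - τ := by
  rcases hτ with rfl | rfl
  · rw [alphaFP_succ, (hfp t).2.2.1 (by linarith)]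
    simp [sub_eq_add_neg]
  · rw [alphaFP_succ, (hfp t).2.2.2 (by linarith)]
    simp

lemma betaFP_succ_of_sign (hfp : IsFictitiousPlay vB a b) (hB : IsDensity δ Δ vB) {σ : ℝ}
    (hσ : σ = 1 ∨ σ = -1) {t : ℕ} (h : 0 < σ * alphaFP b t) :
    betaFP vB a (t + 1) = betaFP vB a t + σ := by
  rcases hσ with rfl | rfl
  · rw [betaFP_succ, (hfp t).1 (by linarith), hB.cumul_one]
    ring
  · rw [betaFP_succ, (hfp t).2.1 (by linarith), cumul_zero]
    ring

lemma not_axisCrossing_of_quadrant (hfp : IsFictitiousPlay vB a b) (hB : IsDensity δ Δ vB)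
    {σ τ : ℝ} (hσ : σ = 1 ∨ σ = -1) (hτ : τ = 1 ∨ τ = -1) {s j : ℕ}
    (h : ∀ k : ℕ, k ≤ j →
      0 < σ * (alphaFP b s - τ * k) ∧ 0 < τ * (betaFP vB a s + σ * k)) :
    ∀ k < j, ¬ AxisCrossing vB a b (s + k) := by
  have horbit : ∀ k ≤ j,
      alphaFP b (s + k) = alphaFP b s - τ * k ∧ betaFP vB a (s + k) = betaFP vB a s + σ * k := by
    intro k hk
    induction k with
    | zero => simp
    | succ k ih =>
      obtain ⟨hα, hβ⟩ := ih (by omega)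
      obtain ⟨hα₀, hβ₀⟩ := h k (by omega)
      rw [← add_assoc, hfp.alphaFP_succ_of_sign hτ (by rwa [hβ]),
        hfp.betaFP_succ_of_sign hB hσ (by rwa [hα]), hα, hβ]
      push_cast
      constructor <;> ring
  intro k hk hcross
  obtain ⟨hα, hβ⟩ := horbit k hk.le
  obtain ⟨-, hβ₁⟩ := horbit (k + 1) hk
  obtain ⟨hα₀, hβ₀⟩ := h k hk.le
  obtain ⟨-, hβ₀₁⟩ := h (k + 1) hk
  rw [← hα] at hα₀
  rw [← hβ] at hβ₀
  rw [← hβ₁, ← add_assoc] at hβ₀₁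
  rcases hcross with hcross | hcross | hcross
  · rw [hcross, mul_zero] at hα₀; exact hα₀.false
  all_goals rcases hτ with rfl | rfl <;> linarith [hcross.1, hcross.2]

lemma rhoFP_succ_eq (hfp : IsFictitiousPlay vB a b) (hB : IsDensity δ Δ vB) {t : ℕ}
    (h : ¬ AxisCrossing vB a b t) : rhoFP vB a b (t + 1) = rhoFP vB a b t := by
  simp only [AxisCrossing, not_or, not_and, not_lt] at h
  obtain ⟨hα, hup, hdown⟩ := h
  obtain ⟨σ, hσ, hσα⟩ := exists_sign_mul_pos hα
  have hβ₁ := hfp.betaFP_succ_of_sign hB hσ hσα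
  have hβ : betaFP vB a t ≠ 0 := by
    intro hβ
    rw [hβ, zero_add] at hβ₁
    rcases hσ with rfl | rfl <;> linarith [hup hβ.le, hdown hβ.ge]
  obtain ⟨τ, hτ, hτβ⟩ := exists_sign_mul_pos hβ
  have hα₁ := hfp.alphaFP_succ_of_sign hτ hτβ
  -- `α` is a nonzero integer, so a unit step towards the axis cannot overshoot it
  have hσα₁ : 0 ≤ σ * alphaFP b (t + 1) := by
    have habs : |alphaFP b t| = σ * alphaFP b t := abs_eq_mul_of_sign hσ hσα.le
    rw [hα₁]
    rcases hσ with rfl | rfl <;> rcases hτ with rfl | rfl <;>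
      linarith [one_le_abs_alphaFP hα]
  have hτβ₁ : 0 ≤ τ * betaFP vB a (t + 1) := by
    rcases hτ with rfl | rfl
    · linarith [hdown (by linarith)]
    · linarith [hup (by linarith)]
  simp only [rhoFP]
  rw [abs_eq_mul_of_sign hσ hσα₁, abs_eq_mul_of_sign hτ hτβ₁, abs_eq_mul_of_sign hσ hσα.le,
    abs_eq_mul_of_sign hτ hτβ.le, hα₁, hβ₁]
  ring

lemma rhoFP_eq_or_exists_axisCrossing (hfp : IsFictitiousPlay vB a b) (hB : IsDensity δ Δ vB)
    {s T : ℕ} (hsT : s ≤ T) :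
    rhoFP vB a b T = rhoFP vB a b s ∨
      ∃ m, s ≤ m ∧ m < T ∧ AxisCrossing vB a b m ∧ rhoFP vB a b m = rhoFP vB a b s := by
  induction T, hsT using Nat.le_induction with
  | base => exact Or.inl rfl
  | succ T hsT ih =>
    rcases ih with hρ | ⟨m, hsm, hmT, hm⟩
    · by_cases hT : AxisCrossing vB a b T
      · exact Or.inr ⟨T, hsT, T.lt_succ_self, hT, hρ⟩
      · exact Or.inl ((hfp.rhoFP_succ_eq hB hT).trans hρ)
    · exact Or.inr ⟨m, hsm, hmT.trans T.lt_succ_self, hm⟩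

lemma exists_quadrant_after_axisCrossing (hfp : IsFictitiousPlay vB a b) (hδ : 0 ≤ δ)
    (hB : IsDensity δ Δ vB) (ha : ∀ t : ℕ, 1 ≤ t → a t ∈ Set.Icc (0 : ℝ) 1) {u : ℕ}
    (hu : AxisCrossing vB a b u) (hρ : 1 < rhoFP vB a b u) :
    ∃ σ τ : ℝ, (σ = 1 ∨ σ = -1) ∧ (τ = 1 ∨ τ = -1) ∧
      ∀ k : ℕ, (k : ℝ) < rhoFP vB a b u - 1 →
        0 < σ * (alphaFP b (u + 1) - τ * k) ∧ 0 < τ * (betaFP vB a (u + 1) + σ * k) := by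
  have hβstep := abs_le.mp (abs_betaFP_succ_sub_le hδ hB ha u)
  by_cases hα : alphaFP b u = 0
  · -- `β` sits at `±ρ`, far from its axis, while Bob's choice pushes `α` off its axis to `-τ`
    have hβ : betaFP vB a u ≠ 0 := by
      intro hβ
      simp only [rhoFP, hα, hβ, abs_zero, add_zero] at hρ
      linarith
    obtain ⟨τ, hτ, hτβ⟩ := exists_sign_mul_pos hβ
    have hα₁ := hfp.alphaFP_succ_of_sign hτ hτβ
    have hρβ : rhoFP vB a b u = τ * betaFP vB a u := by
      rw [rhoFP, hα, abs_zero, zero_add, abs_eq_mul_of_sign hτ hτβ.le]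
    refine ⟨-τ, τ, by rcases hτ with rfl | rfl <;> norm_num, hτ, fun k hk => ?_⟩
    rw [hα₁, hα]
    rcases hτ with rfl | rfl <;> constructor <;> linarith [hβstep.1, hβstep.2]
  · -- `β` crosses the axis in the direction `σ` in which `α` pushes it
    obtain ⟨σ, hσ, hσα⟩ := exists_sign_mul_pos hα
    have hβ₁ := hfp.betaFP_succ_of_sign hB hσ hσα
    have hcross : σ * betaFP vB a u ≤ 0 ∧ 0 < σ * betaFP vB a (u + 1) := by
      rcases hu with hu | hu | hu
      · exact absurd hu hα
      all_goals rcases hσ with rfl | rfl <;> constructor <;> linarith [hu.1, hu.2]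
    have hρα : rhoFP vB a b u = σ * alphaFP b u - σ * betaFP vB a u := by
      rw [rhoFP, abs_eq_mul_of_sign hσ hσα.le]
      rcases hσ with rfl | rfl
      · rw [abs_of_nonpos (by linarith [hcross.1])]; ring
      · rw [abs_of_nonneg (by linarith [hcross.1])]; ring
    have hσα₁ : rhoFP vB a b u - 1 ≤ σ * alphaFP b (u + 1) := by
      have hαstep := abs_le.mp (abs_alphaFP_succ_sub b u).le
      rcases eq_or_ne (betaFP vB a u) 0 with hβ | hβ
      · rw [hβ, mul_zero, sub_zero] at hρα
        rcases hσ with rfl | rfl <;> linarith [hαstep.1, hαstep.2]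
      · obtain ⟨τ, hτ, hτβ⟩ := exists_sign_mul_pos hβ
        rw [hfp.alphaFP_succ_of_sign hτ hτβ]
        rw [hβ₁] at hcross
        rcases hσ with rfl | rfl <;> rcases hτ with rfl | rfl <;> linarith [hcross.1, hcross.2]
    refine ⟨σ, σ, hσ, hσ, fun k hk => ?_⟩
    rcases hσ with rfl | rfl <;> constructor <;> linarith [hcross.2]

lemma rhoFP_sub_one_le_of_axisCrossing (hfp : IsFictitiousPlay vB a b) (hδ : 0 ≤ δ)
    (hB : IsDensity δ Δ vB) (ha : ∀ t : ℕ, 1 ≤ t → a t ∈ Set.Icc (0 : ℝ) 1) {u w : ℕ}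
    (hu : AxisCrossing vB a b u) (hw : AxisCrossing vB a b w) (huw : u < w) :
    rhoFP vB a b u - 1 ≤ (w : ℝ) - u := by
  by_contra! hlt
  have hwu : (1 : ℝ) ≤ (w : ℝ) - u := by
    have : (u : ℝ) + 1 ≤ w := by exact_mod_cast huw
    linarith
  obtain ⟨σ, τ, hσ, hτ, hroom⟩ := hfp.exists_quadrant_after_axisCrossing hδ hB ha hu (by linarith)
  have hquad := hfp.not_axisCrossing_of_quadrant hB hσ hτ (s := u + 1) (j := w - u)
    fun k hk => hroom k (by
      have : (k : ℝ) ≤ ((w - u : ℕ) : ℝ) := by exact_mod_cast hk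
      rw [Nat.cast_sub huw.le] at this
      linarith)
  exact hquad (w - u - 1) (by omega) (by rwa [show u + 1 + (w - u - 1) = w by omega])

end IsFictitiousPlay

end Trajectory

theorem many_radius_increases_take_time_general
    (δ Δ : ℝ) (hδ : 0 < δ)
    (vB : ℝ → ℝ) (hB : IsDensity δ Δ vB)
    (a : ℕ → ℝ) (b : ℕ → Choice)
    (ha : ∀ t : ℕ, 1 ≤ t → a t ∈ Set.Icc (0:ℝ) 1)
    (hfp : IsFictitiousPlay vB a b)
    (n : ℕ) (hn : 7 ≤ n) (t : ℕ → ℕ)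
    (hmono : ∀ i : ℕ, 1 ≤ i → i < n → t i < t (i+1))
    (hinc : ∀ i : ℕ, 1 ≤ i → i < n →
      (⌊rhoFP vB a b (t i)⌋ : ℝ) + 1 ≤ rhoFP vB a b (t (i+1))) :
    (n : ℝ) ^ 2 / 10 < (t n : ℝ) - (t 1 : ℝ) := by
  have hρ : ∀ i, 1 ≤ i → i ≤ n → (i : ℝ) - 1 ≤ rhoFP vB a b (t i) :=
    sub_one_le_of_floor_add_one_le (by unfold rhoFP; positivity) hinc
  have hcrossing : ∀ i, ∃ c, 1 ≤ i → i < n → t i ≤ c ∧ c < t (i + 1) ∧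
      AxisCrossing vB a b c ∧ rhoFP vB a b c = rhoFP vB a b (t i) := by
    intro i
    by_cases hi : 1 ≤ i ∧ i < n
    · rcases hfp.rhoFP_eq_or_exists_axisCrossing hB (hmono i hi.1 hi.2).le with hρeq | ⟨c, hc⟩
      · linarith [hinc i hi.1 hi.2, Int.lt_floor_add_one (rhoFP vB a b (t i))]
      · exact ⟨c, fun _ _ => hc⟩
    · exact ⟨0, fun h₁ h₂ => absurd ⟨h₁, h₂⟩ hi⟩
  choose c hc using hcrossing
  obtain ⟨m, rfl⟩ : ∃ m, n = m + 1 := ⟨n - 1, by omega⟩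
  have hgap : ∀ i, 1 ≤ i → i < m → (i : ℝ) - 2 ≤ (c (i + 1) : ℝ) - c i := by
    intro i hi₁ hi₂
    obtain ⟨-, hci, hcross, hρc⟩ := hc i hi₁ (by omega)
    obtain ⟨hci', -, hcross', -⟩ := hc (i + 1) (by omega) (by omega)
    have := hfp.rhoFP_sub_one_le_of_axisCrossing hδ.le hB ha hcross hcross' (hci.trans_le hci')
    linarith [hρ i hi₁ (by omega)]
  have hsum :=
    sub_one_mul_sub_four_div_two_le_sub (f := fun i => (c i : ℝ)) hgap m (by omega) le_rfl
  have hfirst : (t 1 : ℝ) ≤ c 1 := by exact_mod_cast (hc 1 le_rfl (by omega)).1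
  have hlast : (c m : ℝ) + 1 ≤ t (m + 1) := by exact_mod_cast (hc m (by omega) (by omega)).2.1
  have hm : (6 : ℝ) ≤ m := by exact_mod_cast (by omega : 6 ≤ m)
  push_cast
  nlinarith

/-- If `n ≥ 7` and `t_1 < … < t_n` are rounds with
`ρ_{t_{i+1}} ≥ ⌊ρ_{t_i}⌋ + 1` for each `i`, then `t_n − t_1 > n²/10`. -/
theorem many_radius_increases_take_time
    (δ Δ : ℝ) (hδ : 0 < δ) (hδΔ : δ ≤ Δ)
    (vA vB : ℝ → ℝ) (hA : IsDensity δ Δ vA) (hB : IsDensity δ Δ vB)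
    (a : ℕ → ℝ) (b : ℕ → Choice)
    (ha : ∀ t : ℕ, 1 ≤ t → a t ∈ Set.Icc (0:ℝ) 1)
    (hfp : IsFictitiousPlay vB a b)
    (n : ℕ) (hn : 7 ≤ n) (t : ℕ → ℕ)
    (hmono : ∀ i : ℕ, 1 ≤ i → i < n → t i < t (i+1))
    (hinc : ∀ i : ℕ, 1 ≤ i → i < n →
      (⌊rhoFP vB a b (t i)⌋ : ℝ) + 1 ≤ rhoFP vB a b (t (i+1))) :
    (n : ℝ) ^ 2 / 10 < (t n : ℝ) - (t 1 : ℝ) :=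
  many_radius_increases_take_time_general δ Δ hδ vB hB a b ha hfp n hn t hmono hinc
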